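/- Let (X,S,T) be a minimal system with commuting transformations S and T such that S is transitive (has a dense orbit as a single transformation). Then R_{T,T}(X) ⊆ R_{S,T}(X) ⊆ R_{S,S}(X). -/

import Mathlib

/-- The `n`-th integer iterate of a homeomorphism, as a function. -/
def hpow {X : Type*} [TopologicalSpace X] (S : X ≃ₜ X) (n : ℤ) : X → X :=
  ⇑(S.toEquiv ^ n)

variable {X : Type*} [TopologicalSpace X]

def cube (S T : X ≃ₜ X) : Set (X × X × X × X) :=
  closure {p | ∃ (x : X) (n m : ℤ),
    p = (x, hpow S n x, hpow T m x, hpow S n (hpow T m x))}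

def cube2 (S : X ≃ₜ X) : Set (X × X) :=
  closure {p | ∃ (x : X) (n : ℤ), p = (x, hpow S n x)}

def relS (S T : X ≃ₜ X) : Set (X × X) :=
  {p | ∃ a : X, (p.1, p.2, a, a) ∈ cube S T}

def relT (S T : X ≃ₜ X) : Set (X × X) :=
  {p | ∃ b : X, (p.1, b, p.2, b) ∈ cube S T}

def minimalST (S T : X ≃ₜ X) : Prop :=
  ∀ x : X, Dense {y : X | ∃ n m : ℤ, y = hpow S n (hpow T m x)}

def minimal1 (S : X ≃ₜ X) : Prop :=
  ∀ x : X, Dense {y : X | ∃ n : ℤ, y = hpow S n x}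

def distalST {Y : Type*} [MetricSpace Y] (S T : Y ≃ₜ Y) : Prop :=
  ∀ x y : Y, x ≠ y → ∃ ε > 0, ∀ n m : ℤ,
    ε ≤ dist (hpow S n (hpow T m x)) (hpow S n (hpow T m y))

def proxT {Y : Type*} [MetricSpace Y] (T : Y ≃ₜ Y) : Set (Y × Y) :=
  {p | ∀ ε > 0, ∃ m : ℤ, dist (hpow T m p.1) (hpow T m p.2) < ε}

/-!
Each generator `(x, Uⁿx, Vᵐx, UⁿVᵐx)` of `cube U V` depends continuously on `x` and is moved
diagonally by any homeomorphism `g` commuting with `U` and `V`, while `cube U' V'` is closed and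
invariant under such `g`. So if `x₀` has a dense orbit under the homeomorphisms commuting with
`U, V, U', V'` (minimality gives this for the `⟨S, T⟩`-orbit), then `cube U V ⊆ cube U' V'` as
soon as the generators based at `x₀` lie in `cube U' V'`. When `x₀` is `S`-transitive this holds
for `cube S T ⊆ cube S S` and `cube T T ⊆ cube S T`: the points `(x₀, Sⁿx₀, y, Sⁿy)` and
`(x₀, y, Tᵐx₀, Tᵐy)` lie in the respective cubes for `y` in the `S`-orbit of `x₀`, hence for
all `y`. Inclusions of cubes pass to `relS` and `relT`.
-/

open Set

lemma hpow_eq_coe_zpow (S : X ≃ₜ X) (n : ℤ) : hpow S n = ⇑(S ^ n) :=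
  congrArg DFunLike.coe
    (map_zpow (⟨⟨Homeomorph.toEquiv, rfl⟩, fun _ _ => rfl⟩ : (X ≃ₜ X) →* Equiv.Perm X) S n).symm

lemma continuous_hpow (S : X ≃ₜ X) (n : ℤ) : Continuous (hpow S n) := by
  rw [hpow_eq_coe_zpow]
  exact (S ^ n).continuous

lemma hpow_apply_of_commute {g U : X ≃ₜ X} (h : Commute g U) (n : ℤ) (x : X) :
    hpow U n (g x) = g (hpow U n x) := by
  rw [hpow_eq_coe_zpow]
  exact DFunLike.congr_fun (h.zpow_right n).eq.symm x

lemma hpow_hpow_of_commute {U V : X ≃ₜ X} (h : Commute U V) (n m : ℤ) (x : X) :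
    hpow U n (hpow V m x) = hpow V m (hpow U n x) := by
  rw [hpow_eq_coe_zpow V]
  exact hpow_apply_of_commute (h.zpow_right m).symm n x

def cubeGen (U V : X ≃ₜ X) (n m : ℤ) (x : X) : X × X × X × X :=
  (x, hpow U n x, hpow V m x, hpow U n (hpow V m x))

variable {U V U' V' : X ≃ₜ X}

lemma continuous_cubeGen (n m : ℤ) : Continuous (cubeGen U V n m) := by
  have := continuous_hpow U n
  have := continuous_hpow V m
  unfold cubeGen
  fun_prop

lemma cubeGen_mem_cube (n m : ℤ) (x : X) : cubeGen U V n m x ∈ cube U V :=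
  subset_closure ⟨x, n, m, rfl⟩

lemma isClosed_cube : IsClosed (cube U V) := isClosed_closure

lemma cube_subset_of_cubeGen_mem {C : Set (X × X × X × X)} (hC : IsClosed C)
    (h : ∀ n m x, cubeGen U V n m x ∈ C) : cube U V ⊆ C :=
  closure_minimal (by rintro _ ⟨x, n, m, rfl⟩; exact h n m x) hC

lemma cubeGen_apply_of_commute {g : X ≃ₜ X} (hU : Commute g U) (hV : Commute g V)
    (n m : ℤ) (x : X) :
    cubeGen U V n m (g x) = Prod.map g (Prod.map g (Prod.map g g)) (cubeGen U V n m x) := by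
  simp only [cubeGen, hpow_apply_of_commute hU, hpow_apply_of_commute hV, Prod.map_apply]

lemma mapsTo_cube_of_commute {g : X ≃ₜ X} (hU : Commute g U) (hV : Commute g V) :
    MapsTo (Prod.map g (Prod.map g (Prod.map g g))) (cube U V) (cube U V) := by
  refine mapsTo_iff_subset_preimage.2 <|
    cube_subset_of_cubeGen_mem (isClosed_cube.preimage (by fun_prop)) fun n m x => ?_
  rw [mem_preimage, ← cubeGen_apply_of_commute hU hV]
  exact cubeGen_mem_cube n m (g x)

lemma cube_subset_cube_of_cubeGen_mem {s : Set (X ≃ₜ X)} (hs : {U, V, U', V'} ⊆ s) {x₀ : X}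
    (hx₀ : Dense ((fun g : X ≃ₜ X => g x₀) '' Subgroup.centralizer s))
    (h : ∀ n m, cubeGen U V n m x₀ ∈ cube U' V') : cube U V ⊆ cube U' V' := by
  refine cube_subset_of_cubeGen_mem isClosed_cube fun n m x => ?_
  induction x using hx₀.induction with
  | mem _ hy =>
    obtain ⟨g, hg, rfl⟩ := hy
    have hcomm : ∀ W ∈ ({U, V, U', V'} : Set (X ≃ₜ X)), Commute g W :=
      fun W hW => (Subgroup.mem_centralizer_iff.mp hg W (hs hW)).symm
    rw [cubeGen_apply_of_commute (hcomm U (by simp)) (hcomm V (by simp))]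
    exact mapsTo_cube_of_commute (hcomm U' (by simp)) (hcomm V' (by simp)) (h n m)
  | isClosed => exact isClosed_cube.preimage (continuous_cubeGen n m)

lemma dense_centralizer_orbit {S T : X ≃ₜ X} (hST : Commute S T) (hmin : minimalST S T)
    (x : X) : Dense ((fun g : X ≃ₜ X => g x) '' Subgroup.centralizer {S, T}) := by
  have hS : S ∈ Subgroup.centralizer {S, T} := by
    simp [Subgroup.mem_centralizer_iff, hST.eq.symm]
  have hT : T ∈ Subgroup.centralizer {S, T} := by
    simp [Subgroup.mem_centralizer_iff, hST.eq]
  refine (hmin x).mono ?_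
  rintro _ ⟨n, m, rfl⟩
  refine ⟨S ^ n * T ^ m, mul_mem (zpow_mem hS n) (zpow_mem hT m), ?_⟩
  rw [hpow_eq_coe_zpow, hpow_eq_coe_zpow]
  rfl

section Transitive

variable {x₀ : X} (hx₀ : Dense {y : X | ∃ n : ℤ, y = hpow U n x₀})
include hx₀

lemma mem_cube_self_of_dense_orbit (n : ℤ) (y : X) :
    (x₀, hpow U n x₀, y, hpow U n y) ∈ cube U U := by
  induction y using hx₀.induction with
  | mem _ hy =>
    obtain ⟨k, rfl⟩ := hy
    exact cubeGen_mem_cube n k x₀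
  | isClosed =>
    have := continuous_hpow U n
    exact isClosed_cube.preimage (by fun_prop)

lemma mem_cube_of_dense_orbit (hUV : Commute U V) (m : ℤ) (y : X) :
    (x₀, y, hpow V m x₀, hpow V m y) ∈ cube U V := by
  induction y using hx₀.induction with
  | mem _ hy =>
    obtain ⟨k, rfl⟩ := hy
    rw [← hpow_hpow_of_commute hUV]
    exact cubeGen_mem_cube k m x₀
  | isClosed =>
    have := continuous_hpow V m
    exact isClosed_cube.preimage (by fun_prop)

end Transitive

lemma relS_mono (h : cube U V ⊆ cube U' V') : relS U V ⊆ relS U' V' :=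
  fun _ ⟨a, ha⟩ => ⟨a, h ha⟩

lemma relT_mono (h : cube U V ⊆ cube U' V') : relT U V ⊆ relT U' V' :=
  fun _ ⟨b, hb⟩ => ⟨b, h hb⟩

theorem stmt16_general {X : Type*} [MetricSpace X] (S T : X ≃ₜ X)
    (hST : ∀ x, S (T x) = T (S x)) (hmin : minimalST S T)
    (htrans : ∃ x : X, Dense {y : X | ∃ n : ℤ, y = hpow S n x}) :
    relS T T ∩ relT T T ⊆ relS S T ∩ relT S T ∧
      relS S T ∩ relT S T ⊆ relS S S ∩ relT S S := by
  obtain ⟨x₀, hx₀⟩ := htrans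
  have hcomm : Commute S T := Homeomorph.ext hST
  have hdense := dense_centralizer_orbit hcomm hmin x₀
  have hTT_ST : cube T T ⊆ cube S T :=
    cube_subset_cube_of_cubeGen_mem (by simp) hdense fun n m => by
      simpa only [cubeGen, hpow_hpow_of_commute (Commute.refl T) m n] using
        mem_cube_of_dense_orbit hx₀ hcomm m (hpow T n x₀)
  have hST_SS : cube S T ⊆ cube S S :=
    cube_subset_cube_of_cubeGen_mem (by simp [insert_subset_iff]) hdense fun n m =>
      mem_cube_self_of_dense_orbit hx₀ n (hpow T m x₀)
  exact ⟨inter_subset_inter (relS_mono hTT_ST) (relT_mono hTT_ST),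
    inter_subset_inter (relS_mono hST_SS) (relT_mono hST_SS)⟩

theorem stmt16 {X : Type*} [MetricSpace X] [CompactSpace X] (S T : X ≃ₜ X)
    (hST : ∀ x, S (T x) = T (S x)) (hmin : minimalST S T)
    (htrans : ∃ x : X, Dense {y : X | ∃ n : ℤ, y = hpow S n x}) :
    relS T T ∩ relT T T ⊆ relS S T ∩ relT S T ∧
      relS S T ∩ relT S T ⊆ relS S S ∩ relT S S :=
  stmt16_general S T hST hmin htrans
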